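/- (Case 2 symmetrization identity) For reals c, d, r with d > 0 and r > 1, let Y take values (c, c+3d, c+4d) with weights proportional to (r√r, (r−1)√(r+1), √r), and Y′ take values (c+d, c+2d, c+3d) with weights proportional to (r, √(r+r²), 1), with Y, Y′ independent. Then Y − Y′ is symmetric about zero, supported on {−3d, −2d, −d, 0, d, 2d, 3d} with weights proportional to (r√r, r²√(r+1), r²√r, (r−1)√(r+1), r²√r, r²√(r+1), r√r). -/

import Mathlib

open MeasureTheory Measure ENNReal

/-!
Write `x = √r` and `y = √(r + 1)`, so that `√(r + r²) = x y`. Of the nine products of a weight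
of `Y` with a weight of `Y'`, two land on `d` and two on `2d`, merging to
`(r - 1) y · x y + x = r² x` and `(r - 1) y · r + x · x y = r² y`; the seven weights of `Y - Y'`
are then the palindrome `r x, r² y, r² x, (r - 1) y, r² x, r² y, r x`, and their sum `T`
factors as the product of the two normalising constants.
-/

theorem map_sub_prod_threePoint {R : Type*} [CommRing R] [MeasurableSpace R] [MeasurableSub₂ R]
    (c d : R) (a₀ a₃ a₄ b₁ b₂ b₃ : ℝ≥0∞) :
    ((a₀ • dirac c + a₃ • dirac (c + 3 * d) + a₄ • dirac (c + 4 * d)).prod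
        (b₁ • dirac (c + d) + b₂ • dirac (c + 2 * d) + b₃ • dirac (c + 3 * d))).map
        (fun p : R × R => p.1 - p.2) =
      (a₀ * b₃) • dirac (-(3 * d)) + (a₀ * b₂) • dirac (-(2 * d)) + (a₀ * b₁) • dirac (-d) +
        (a₃ * b₃) • dirac 0 + (a₃ * b₂ + a₄ * b₃) • dirac d +
        (a₃ * b₁ + a₄ * b₂) • dirac (2 * d) + (a₄ * b₁) • dirac (3 * d) := by
  have hsub : Measurable fun p : R × R => p.1 - p.2 := measurable_sub
  simp only [add_prod, prod_smul_left]
  simp only [prod_add, prod_smul_right, smul_add, smul_smul, dirac_prod_dirac,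
    Measure.map_add _ _ hsub, Measure.map_smul, map_dirac' hsub, add_smul]
  simp only [show c - (c + d) = -d by ring, show c - (c + 2 * d) = -(2 * d) by ring,
    show c - (c + 3 * d) = -(3 * d) by ring, show c + 3 * d - (c + d) = 2 * d by ring,
    show c + 3 * d - (c + 2 * d) = d by ring, show c + 3 * d - (c + 3 * d) = 0 by ring,
    show c + 4 * d - (c + d) = 3 * d by ring, show c + 4 * d - (c + 2 * d) = 2 * d by ring,
    show c + 4 * d - (c + 3 * d) = d by ring]
  abel

theorem map_neg_sevenPoint_of_palindromic {R : Type*} [Ring R] [MeasurableSpace R]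
    [MeasurableNeg R] (d : R) (w₀ w₁ w₂ w₃ : ℝ≥0∞) :
    (w₃ • dirac (-(3 * d)) + w₂ • dirac (-(2 * d)) + w₁ • dirac (-d) + w₀ • dirac 0 +
        w₁ • dirac d + w₂ • dirac (2 * d) + w₃ • dirac (3 * d)).map (fun x : R => -x) =
      w₃ • dirac (-(3 * d)) + w₂ • dirac (-(2 * d)) + w₁ • dirac (-d) + w₀ • dirac 0 +
        w₁ • dirac d + w₂ • dirac (2 * d) + w₃ • dirac (3 * d) := by
  have hneg : Measurable fun x : R => -x := measurable_neg
  simp only [Measure.map_add _ _ hneg, Measure.map_smul, map_dirac' hneg, neg_neg, neg_zero]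
  abel

theorem ofReal_div_mul_ofReal_div {a b s t : ℝ} (ha : 0 ≤ a) (hs : 0 ≤ s) :
    ENNReal.ofReal (a / s) * ENNReal.ofReal (b / t) = ENNReal.ofReal (a * b / (s * t)) := by
  rw [← ofReal_mul (div_nonneg ha hs), div_mul_div_comm]

theorem sqrt_add_sq {r : ℝ} (hr : 0 ≤ r) : √(r + r ^ 2) = √r * √(r + 1) := by
  rw [← Real.sqrt_mul hr]
  ring_nf

theorem case2_mass_mul_mass {r : ℝ} (hr : 0 ≤ r) :
    (r * √r + (r - 1) * √(r + 1) + √r) * (r + √(r + r ^ 2) + 1) =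
      r * √r + r ^ 2 * √(r + 1) + r ^ 2 * √r + (r - 1) * √(r + 1) + r ^ 2 * √r +
        r ^ 2 * √(r + 1) + r * √r := by
  rw [sqrt_add_sq hr]
  linear_combination ((r + 1) * √(r + 1)) * Real.mul_self_sqrt hr +
    ((r - 1) * √r) * Real.mul_self_sqrt (by linarith : 0 ≤ r + 1)

theorem case2_symmetrization_general (c d r : ℝ) (hr : 1 < r) :
    let s : ℝ := r * Real.sqrt r + (r - 1) * Real.sqrt (r + 1) + Real.sqrt r
    let s' : ℝ := r + Real.sqrt (r + r ^ 2) + 1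
    let T : ℝ := r * Real.sqrt r + r ^ 2 * Real.sqrt (r + 1) + r ^ 2 * Real.sqrt r +
      (r - 1) * Real.sqrt (r + 1) + r ^ 2 * Real.sqrt r + r ^ 2 * Real.sqrt (r + 1) +
      r * Real.sqrt r
    let ν : Measure ℝ := Measure.map (fun p : ℝ × ℝ => p.1 - p.2)
      ((ENNReal.ofReal (r * Real.sqrt r / s) • Measure.dirac c +
          ENNReal.ofReal ((r - 1) * Real.sqrt (r + 1) / s) • Measure.dirac (c + 3 * d) +
          ENNReal.ofReal (Real.sqrt r / s) • Measure.dirac (c + 4 * d)).prod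
        (ENNReal.ofReal (r / s') • Measure.dirac (c + d) +
          ENNReal.ofReal (Real.sqrt (r + r ^ 2) / s') • Measure.dirac (c + 2 * d) +
          ENNReal.ofReal (1 / s') • Measure.dirac (c + 3 * d)))
    ν.map (fun x : ℝ => -x) = ν ∧
      ν = ENNReal.ofReal (r * Real.sqrt r / T) • Measure.dirac (-(3 * d)) +
          ENNReal.ofReal (r ^ 2 * Real.sqrt (r + 1) / T) • Measure.dirac (-(2 * d)) +
          ENNReal.ofReal (r ^ 2 * Real.sqrt r / T) • Measure.dirac (-d) +
          ENNReal.ofReal ((r - 1) * Real.sqrt (r + 1) / T) • Measure.dirac (0 : ℝ) +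
          ENNReal.ofReal (r ^ 2 * Real.sqrt r / T) • Measure.dirac d +
          ENNReal.ofReal (r ^ 2 * Real.sqrt (r + 1) / T) • Measure.dirac (2 * d) +
          ENNReal.ofReal (r * Real.sqrt r / T) • Measure.dirac (3 * d) := by
  intro s s' T ν
  have hr0 : 0 ≤ r := by linarith
  have hr1 : 0 ≤ r - 1 := by linarith
  have hs : 0 ≤ s := by positivity
  have hT : s * s' = T := case2_mass_mul_mass hr0
  have hν : ν = _ := map_sub_prod_threePoint c d _ _ _ _ _ _
  simp only [ofReal_div_mul_ofReal_div (mul_nonneg hr0 (Real.sqrt_nonneg r)) hs,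
    ofReal_div_mul_ofReal_div (mul_nonneg hr1 (Real.sqrt_nonneg (r + 1))) hs,
    ofReal_div_mul_ofReal_div (Real.sqrt_nonneg r) hs, hT] at hν
  refine (and_iff_right_of_imp fun hlaw => ?_).2 ?_
  · rw [hlaw]
    exact map_neg_sevenPoint_of_palindromic d _ _ _ _
  · rw [hν, ← ofReal_add (by positivity) (by positivity),
      ← ofReal_add (by positivity) (by positivity), sqrt_add_sq hr0]
    ring_nf
    rw [Real.sq_sqrt hr0, Real.sq_sqrt (by linarith : 0 ≤ 1 + r)]
    ring_nf

/-- Case 2 symmetrization identity: with `Y` on `(c, c+3d, c+4d)` with weights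
proportional to `(r√r, (r-1)√(r+1), √r)` and `Y'` on `(c+d, c+2d, c+3d)` with weights
proportional to `(r, √(r+r²), 1)`, independent, the difference `Y - Y'` is symmetric
about zero, supported on `{-3d, -2d, -d, 0, d, 2d, 3d}` with weights proportional to
`(r√r, r²√(r+1), r²√r, (r-1)√(r+1), r²√r, r²√(r+1), r√r)`. -/
theorem case2_symmetrization (c d r : ℝ) (hd : 0 < d) (hr : 1 < r) :
    let s : ℝ := r * Real.sqrt r + (r - 1) * Real.sqrt (r + 1) + Real.sqrt r
    let s' : ℝ := r + Real.sqrt (r + r ^ 2) + 1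
    let T : ℝ := r * Real.sqrt r + r ^ 2 * Real.sqrt (r + 1) + r ^ 2 * Real.sqrt r +
      (r - 1) * Real.sqrt (r + 1) + r ^ 2 * Real.sqrt r + r ^ 2 * Real.sqrt (r + 1) +
      r * Real.sqrt r
    let ν : Measure ℝ := Measure.map (fun p : ℝ × ℝ => p.1 - p.2)
      ((ENNReal.ofReal (r * Real.sqrt r / s) • Measure.dirac c +
          ENNReal.ofReal ((r - 1) * Real.sqrt (r + 1) / s) • Measure.dirac (c + 3 * d) +
          ENNReal.ofReal (Real.sqrt r / s) • Measure.dirac (c + 4 * d)).prod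
        (ENNReal.ofReal (r / s') • Measure.dirac (c + d) +
          ENNReal.ofReal (Real.sqrt (r + r ^ 2) / s') • Measure.dirac (c + 2 * d) +
          ENNReal.ofReal (1 / s') • Measure.dirac (c + 3 * d)))
    ν.map (fun x : ℝ => -x) = ν ∧
      ν = ENNReal.ofReal (r * Real.sqrt r / T) • Measure.dirac (-(3 * d)) +
          ENNReal.ofReal (r ^ 2 * Real.sqrt (r + 1) / T) • Measure.dirac (-(2 * d)) +
          ENNReal.ofReal (r ^ 2 * Real.sqrt r / T) • Measure.dirac (-d) +
          ENNReal.ofReal ((r - 1) * Real.sqrt (r + 1) / T) • Measure.dirac (0 : ℝ) +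
          ENNReal.ofReal (r ^ 2 * Real.sqrt r / T) • Measure.dirac d +
          ENNReal.ofReal (r ^ 2 * Real.sqrt (r + 1) / T) • Measure.dirac (2 * d) +
          ENNReal.ofReal (r * Real.sqrt r / T) • Measure.dirac (3 * d) :=
  case2_symmetrization_general c d r hr
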